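/- arXiv:1801.06739 — 3 statements merged into one kernel-verified Lean document; each statement's English description precedes it below -/
import Mathlib

section
/- If the Radon–Nikodym derivative dP_θ/dQ_θ is 𝒟-measurable and equal to a single random variable L not depending on θ, then for all θ, θ' one has ν(dP_θ/dν | 𝒟) · ν(dQ_θ'/dν | 𝒟) = ν(dQ_θ/dν | 𝒟) · ν(dP_θ'/dν | 𝒟) almost surely (everywhere equivalence of the likelihood ratios). -/
open MeasureTheory

/-! By the chain rule `dP_θ/dν = L · dQ_θ/dν`, and a `𝒟`-measurable factor pulls out of a
conditional expectation given `𝒟`, so `ν(dP_θ/dν | 𝒟) = L · ν(dQ_θ/dν | 𝒟)` for every `θ`.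
Cross-multiplying two such identities eliminates `L`. -/

namespace MeasureTheory.Measure

variable {α : Type*} {mα : MeasurableSpace α} {μ ν κ : Measure α}

lemma toReal_rnDeriv_ae_eq_mul [SigmaFinite μ] [SigmaFinite ν] [SigmaFinite κ] (hμν : μ ≪ ν)
    {L : α → ℝ} (hL : (fun x => (μ.rnDeriv ν x).toReal) =ᵐ[κ] L) :
    (fun x => (μ.rnDeriv κ x).toReal) =ᵐ[κ] L * fun x => (ν.rnDeriv κ x).toReal := by
  filter_upwards [rnDeriv_mul_rnDeriv (κ := κ) hμν, hL] with x hchain hLx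
  rw [Pi.mul_apply] at hchain ⊢
  rw [← hchain, ENNReal.toReal_mul, hLx]

lemma condExp_toReal_rnDeriv_ae_eq_mul [IsFiniteMeasure μ] [IsFiniteMeasure ν] [SigmaFinite κ]
    {m : MeasurableSpace α} (hμν : μ ≪ ν) {L : α → ℝ} (hLm : StronglyMeasurable[m] L)
    (hL : (fun x => (μ.rnDeriv ν x).toReal) =ᵐ[κ] L) :
    κ[fun x => (μ.rnDeriv κ x).toReal | m] =ᵐ[κ]
      L * κ[fun x => (ν.rnDeriv κ x).toReal | m] := by
  have hchain := toReal_rnDeriv_ae_eq_mul hμν hL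
  calc κ[fun x => (μ.rnDeriv κ x).toReal | m]
      =ᵐ[κ] κ[L * fun x => (ν.rnDeriv κ x).toReal | m] := condExp_congr_ae hchain
    _ =ᵐ[κ] L * κ[fun x => (ν.rnDeriv κ x).toReal | m] :=
      condExp_mul_of_stronglyMeasurable_left hLm
        (integrable_toReal_rnDeriv.congr hchain) integrable_toReal_rnDeriv

end MeasureTheory.Measure

theorem everywhere_equivalent_of_measurable_likelihood_ratio_general
    {Ω Θ : Type*} {mΩ : MeasurableSpace Ω} (ν : Measure Ω) [SigmaFinite ν]
    (P Q : Θ → Measure Ω) [∀ θ, IsProbabilityMeasure (P θ)]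
    [∀ θ, IsProbabilityMeasure (Q θ)]
    (hPQ : ∀ θ, P θ ≪ Q θ)
    (𝒟 : MeasurableSpace Ω)
    (L : Ω → ℝ) (hL : Measurable[𝒟] L)
    (hconst : ∀ θ, (fun ω => ((P θ).rnDeriv (Q θ) ω).toReal) =ᵐ[ν] L) :
    ∀ θ θ', ∀ᵐ ω ∂ν,
      (ν[fun ω => ((P θ).rnDeriv ν ω).toReal | 𝒟]) ω *
        (ν[fun ω => ((Q θ').rnDeriv ν ω).toReal | 𝒟]) ω =
      (ν[fun ω => ((Q θ).rnDeriv ν ω).toReal | 𝒟]) ω *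
        (ν[fun ω => ((P θ').rnDeriv ν ω).toReal | 𝒟]) ω := by
  have hfactor θ :=
    Measure.condExp_toReal_rnDeriv_ae_eq_mul (hPQ θ) hL.stronglyMeasurable (hconst θ)
  intro θ θ'
  filter_upwards [hfactor θ, hfactor θ'] with ω hθ hθ'
  rw [Pi.mul_apply] at hθ hθ'
  rw [hθ, hθ']
  ring

/-- **Ignorability lemma, everywhere version.** If the Radon–Nikodym derivative
`dP_θ/dQ_θ` is `𝒟`-measurable and equal to a single random variable `L` not depending
on `θ`, then for all `θ, θ'`,
`ν(dP_θ/dν | 𝒟) · ν(dQ_θ'/dν | 𝒟) = ν(dQ_θ/dν | 𝒟) · ν(dP_θ'/dν | 𝒟)` `ν`-a.s.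
(everywhere equivalence of the likelihood ratios). -/
theorem everywhere_equivalent_of_measurable_likelihood_ratio
    {Ω Θ : Type*} {mΩ : MeasurableSpace Ω} (ν : Measure Ω) [SigmaFinite ν]
    (P Q : Θ → Measure Ω) [∀ θ, IsProbabilityMeasure (P θ)]
    [∀ θ, IsProbabilityMeasure (Q θ)]
    (hPν : ∀ θ, P θ ≪ ν) (hQν : ∀ θ, Q θ ≪ ν) (hPQ : ∀ θ, P θ ≪ Q θ)
    (𝒟 : MeasurableSpace Ω) (h𝒟 : 𝒟 ≤ mΩ) [SigmaFinite (ν.trim h𝒟)]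
    (L : Ω → ℝ) (hL : Measurable[𝒟] L)
    (hconst : ∀ θ, (fun ω => ((P θ).rnDeriv (Q θ) ω).toReal) =ᵐ[ν] L) :
    ∀ θ θ', ∀ᵐ ω ∂ν,
      (ν[fun ω => ((P θ).rnDeriv ν ω).toReal | 𝒟]) ω *
        (ν[fun ω => ((Q θ').rnDeriv ν ω).toReal | 𝒟]) ω =
      (ν[fun ω => ((Q θ).rnDeriv ν ω).toReal | 𝒟]) ω *
        (ν[fun ω => ((P θ').rnDeriv ν ω).toReal | 𝒟]) ω :=
  everywhere_equivalent_of_measurable_likelihood_ratio_general (mΩ := mΩ) ν P Q hPQ 𝒟 L hL hconst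
end

section
/- With 𝒴 = σ(Y_1,...,Y_n), 𝒴_m = σ(Y_1,...,Y_m), ℳ_m = σ({M ≤ i} : i ≤ m), and ℱ_m = 𝒴_m ∨ ℳ_m, suppose that under a measure Q the sigma-algebras 𝒴 and ℳ_n are independent. Then the meet (intersection) satisfies 𝒴 ∧ ℱ_m ⊇ 𝒴_m, and any 𝒴-measurable random variable that is also ℱ_m-measurable is 𝒴_m-measurable up to Q-null sets. -/
open MeasureTheory MeasurableSpace ProbabilityTheory Set

lemma aux_indicator_ae_eq_condexp
    {Ω : Type*} {mΩ : MeasurableSpace Ω} (μ : Measure Ω) [IsProbabilityMeasure μ]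
    (𝒴 𝒢 ℋ : MeasurableSpace Ω) (h𝒢𝒴 : 𝒢 ≤ 𝒴) (h𝒴le : 𝒴 ≤ mΩ) (hℋle : ℋ ≤ mΩ)
    (hInd : ∀ t1 t2 : Set Ω, MeasurableSet[𝒴] t1 → MeasurableSet[ℋ] t2 →
      μ (t1 ∩ t2) = μ t1 * μ t2)
    (C : Set Ω) (hC𝒴 : MeasurableSet[𝒴] C) (hCF : MeasurableSet[𝒢 ⊔ ℋ] C) :
    C.indicator (fun _ => (1 : ℝ)) =ᵐ[μ] μ[C.indicator (fun _ => (1 : ℝ)) | 𝒢] := by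
  letI : MeasurableSpace Ω := mΩ
  have h𝒢 : 𝒢 ≤ mΩ := h𝒢𝒴.trans h𝒴le
  have hle : 𝒢 ⊔ ℋ ≤ mΩ := sup_le h𝒢 hℋle
  have hCm0 : MeasurableSet[mΩ] C := h𝒴le _ hC𝒴
  set i1 : Ω → ℝ := C.indicator (fun _ => (1 : ℝ)) with hi1
  have hint : Integrable i1 μ := (integrable_const (1 : ℝ)).indicator hCm0
  set h : Ω → ℝ := μ[i1|𝒢] with hh
  have hh_int : Integrable h μ := integrable_condExp
  have hh_sm : StronglyMeasurable[𝒢] h := stronglyMeasurable_condExp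
  have hh_nonneg : 0 ≤ᵐ[μ] h :=
    condExp_nonneg (ae_of_all _ fun ω => Set.indicator_nonneg (fun _ _ => zero_le_one) ω)
  have hh_le_one : h ≤ᵐ[μ] fun _ => (1 : ℝ) := by
    have h1 : μ[(fun _ => (1 : ℝ))|𝒢] = fun _ => (1 : ℝ) := condExp_const h𝒢 1
    have := condExp_mono (μ := μ) (m := 𝒢) hint (integrable_const (1 : ℝ))
      (ae_of_all _ fun ω => by
        by_cases hc : ω ∈ C <;> simp [i1, Set.indicator_apply, hc])
    rwa [h1] at this
  have hi1_integral : ∫ x, i1 x ∂μ = (μ C).toReal := by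
    rw [hi1, integral_indicator_const _ hCm0]; simp; rfl
  have hν₁ : ∀ D : Set Ω, MeasurableSet[mΩ] D →
      μ.withDensity (fun ω => ENNReal.ofReal (h ω)) D = ENNReal.ofReal (∫ x in D, h x ∂μ) := by
    intro D hD
    rw [withDensity_apply _ hD,
      ← ofReal_integral_eq_lintegral_ofReal hh_int.integrableOn (ae_restrict_of_ae hh_nonneg)]
  set ν₁ := μ.withDensity (fun ω => ENNReal.ofReal (h ω)) with hν₁def
  set ν₂ := μ.restrict C with hν₂def
  haveI : IsFiniteMeasure ν₁ := by
    constructor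
    rw [hν₁ _ MeasurableSet.univ]
    exact ENNReal.ofReal_lt_top
  -- the π-system of rectangles
  set P : Set (Set Ω) := {D | ∃ A B : Set Ω, MeasurableSet[𝒢] A ∧ MeasurableSet[ℋ] B ∧
    D = A ∩ B} with hP
  have hgen : 𝒢 ⊔ ℋ = MeasurableSpace.generateFrom P := by
    refine le_antisymm (sup_le ?_ ?_) (MeasurableSpace.generateFrom_le ?_)
    · intro A hA
      exact measurableSet_generateFrom ⟨A, Set.univ, hA, MeasurableSet.univ, (inter_univ A).symm⟩
    · intro B hB
      exact measurableSet_generateFrom ⟨Set.univ, B, MeasurableSet.univ, hB, (univ_inter B).symm⟩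
    · rintro D ⟨A, B, hA, hB, rfl⟩
      exact ((le_sup_left : 𝒢 ≤ 𝒢 ⊔ ℋ) _ hA).inter ((le_sup_right : ℋ ≤ 𝒢 ⊔ ℋ) _ hB)
  have hpi : IsPiSystem P := by
    rintro _ ⟨A₁, B₁, hA₁, hB₁, rfl⟩ _ ⟨A₂, B₂, hA₂, hB₂, rfl⟩ -
    exact ⟨A₁ ∩ A₂, B₁ ∩ B₂, hA₁.inter hA₂, hB₁.inter hB₂, by
      ext ω; simp only [Set.mem_inter_iff]; tauto⟩
  have htrim : ν₁.trim hle = ν₂.trim hle := by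
    refine ext_of_generate_finite P hgen hpi ?_ ?_
    · rintro _ ⟨A, B, hA, hB, rfl⟩
      have hABsup : MeasurableSet[𝒢 ⊔ ℋ] (A ∩ B) :=
        ((le_sup_left : 𝒢 ≤ 𝒢 ⊔ ℋ) _ hA).inter ((le_sup_right : ℋ ≤ 𝒢 ⊔ ℋ) _ hB)
      have hA0 : MeasurableSet[mΩ] A := h𝒢 _ hA
      have hB0 : MeasurableSet[mΩ] B := hℋle _ hB
      have hABm0 : MeasurableSet[mΩ] (A ∩ B) := hA0.inter hB0
      rw [trim_measurableSet_eq hle hABsup, trim_measurableSet_eq hle hABsup,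
        hν₁ _ hABm0, hν₂def, Measure.restrict_apply hABm0]
      -- compute the set integral as a product using independence of functions
      have hXmeas : Measurable[ℋ] (B.indicator (fun _ => (1 : ℝ))) :=
        measurable_const.indicator hB
      have hZmeas : Measurable[𝒴] (A.indicator h) :=
        ((hh_sm.measurable.mono h𝒢𝒴 le_rfl).indicator (h𝒢𝒴 _ hA))
      have hIndepF : IndepFun (B.indicator (fun _ => (1 : ℝ))) (A.indicator h) μ := by
        show Indep (MeasurableSpace.comap _ _) (MeasurableSpace.comap _ _) μ
        refine (Indep_iff _ _ μ).mpr fun t1 t2 ht1 ht2 => ?_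
        rw [Set.inter_comm, hInd t2 t1 (hZmeas.comap_le _ ht2) (hXmeas.comap_le _ ht1), mul_comm]
      have hfuneq : B.indicator (fun _ => (1 : ℝ)) * A.indicator h = (A ∩ B).indicator h := by
        funext ω
        by_cases h1 : ω ∈ A <;> by_cases h2 : ω ∈ B <;>
          simp [Set.indicator_apply, h1, h2, Set.mem_inter_iff]
      have hX_aesm := (hXmeas.mono hℋle le_rfl).aestronglyMeasurable (μ := μ)
      have hZ_aesm := (hZmeas.mono h𝒴le le_rfl).aestronglyMeasurable (μ := μ)
      have hprod := hIndepF.integral_mul_eq_mul_integral hX_aesm hZ_aesm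
      have hintX : ∫ x, B.indicator (fun _ => (1 : ℝ)) x ∂μ = (μ B).toReal := by
        rw [integral_indicator_const _ hB0]; simp; rfl
      have hintZ : ∫ x, A.indicator h x ∂μ = (μ (A ∩ C)).toReal := by
        rw [integral_indicator hA0, setIntegral_condExp h𝒢 hint hA, hi1,
          setIntegral_indicator hCm0]
        simp; rfl
      have hset_int : ∫ x in A ∩ B, h x ∂μ = (μ B).toReal * (μ (A ∩ C)).toReal := by
        rw [← integral_indicator hABm0, ← hfuneq]
        rw [hintX, hintZ] at hprod
        exact hprod
      rw [hset_int]
      have hset : (A ∩ B) ∩ C = (C ∩ A) ∩ B := by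
        ext ω; simp only [Set.mem_inter_iff]; tauto
      rw [hset, hInd (C ∩ A) B (hC𝒴.inter (h𝒢𝒴 _ hA)) hB,
        ENNReal.ofReal_mul ENNReal.toReal_nonneg,
        ENNReal.ofReal_toReal (measure_ne_top _ _), ENNReal.ofReal_toReal (measure_ne_top _ _),
        Set.inter_comm A C, mul_comm]
    · rw [trim_measurableSet_eq hle MeasurableSet.univ,
        trim_measurableSet_eq hle MeasurableSet.univ, hν₁ _ MeasurableSet.univ, hν₂def,
        Measure.restrict_apply MeasurableSet.univ, Set.univ_inter, setIntegral_univ, hh,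
        integral_condExp h𝒢, hi1_integral, ENNReal.ofReal_toReal (measure_ne_top _ _)]
  have key : ∀ D : Set Ω, MeasurableSet[𝒢 ⊔ ℋ] D →
      ENNReal.ofReal (∫ x in D, h x ∂μ) = μ (C ∩ D) := by
    intro D hD
    have hD0 : MeasurableSet[mΩ] D := hle _ hD
    calc ENNReal.ofReal (∫ x in D, h x ∂μ) = ν₁ D := (hν₁ _ hD0).symm
    _ = ν₁.trim hle D := (trim_measurableSet_eq hle hD).symm
    _ = ν₂.trim hle D := by rw [htrim]
    _ = ν₂ D := trim_measurableSet_eq hle hD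
    _ = μ (C ∩ D) := by rw [hν₂def, Measure.restrict_apply hD0, Set.inter_comm]
  have hIC : ∫ x in C, h x ∂μ = (μ C).toReal := by
    have hkeyC := key C hCF
    rw [Set.inter_self] at hkeyC
    have hnn : 0 ≤ ∫ x in C, h x ∂μ :=
      integral_nonneg_of_ae (ae_restrict_of_ae hh_nonneg)
    rw [← hkeyC, ENNReal.toReal_ofReal hnn]
  have hIh : ∫ x, h x ∂μ = (μ C).toReal := by
    rw [hh, integral_condExp h𝒢, hi1_integral]
  have hCind_int : Integrable (C.indicator h) μ := hh_int.indicator hCm0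
  have hICh : ∫ x, C.indicator h x ∂μ = (μ C).toReal := by
    rw [integral_indicator hCm0]; exact hIC
  have e1 : (i1 - C.indicator h) =ᵐ[μ] 0 := by
    refine (integral_eq_zero_iff_of_nonneg_ae ?_ (hint.sub hCind_int)).mp ?_
    · filter_upwards [hh_le_one] with ω hω
      simp only [Pi.sub_apply, Pi.zero_apply]
      have h1 : h ω ≤ 1 := hω
      by_cases hc : ω ∈ C
      · simp only [hi1, Set.indicator_of_mem hc]
        linarith
      · simp [hi1, Set.indicator_of_notMem hc]
    · simp only [Pi.sub_apply]
      rw [integral_sub hint hCind_int, hi1_integral, hICh, sub_self]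
  have e2 : (h - C.indicator h) =ᵐ[μ] 0 := by
    refine (integral_eq_zero_iff_of_nonneg_ae ?_ (hh_int.sub hCind_int)).mp ?_
    · filter_upwards [hh_nonneg] with ω hω
      simp only [Pi.sub_apply, Pi.zero_apply]
      have h0 : 0 ≤ h ω := hω
      by_cases hc : ω ∈ C
      · simp [Set.indicator_of_mem hc]
      · simp only [Set.indicator_of_notMem hc, sub_zero]
        exact h0
    · simp only [Pi.sub_apply]
      rw [integral_sub hh_int hCind_int, hIh, hICh, sub_self]
  filter_upwards [e1, e2] with ω h1 h2
  simp only [Pi.sub_apply, Pi.zero_apply] at h1 h2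
  show i1 ω = h ω
  linarith

lemma aux_iInf_rat (x : ℝ) (hx₁ : -2 < x) (hx₂ : x < 2) :
    ⨅ q : ℚ, (if x ≤ (q : ℝ) then max (q : ℝ) (-2) else 2) = x := by
  have hbdd : BddBelow (Set.range fun q : ℚ => (if x ≤ (q : ℝ) then max (q : ℝ) (-2) else 2)) := by
    refine ⟨-2, ?_⟩
    rintro _ ⟨q, rfl⟩
    dsimp only
    split_ifs
    · exact le_max_right _ _
    · norm_num
  refine le_antisymm ?_ ?_
  · refine le_of_forall_gt fun c hc => ?_
    obtain ⟨q, hq1, hq2⟩ := exists_rat_btwn hc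
    have hterm : (if x ≤ (q : ℝ) then max (q : ℝ) (-2) else 2) = (q : ℝ) := by
      rw [if_pos hq1.le, max_eq_left (by linarith)]
    calc ⨅ q : ℚ, (if x ≤ (q : ℝ) then max (q : ℝ) (-2) else 2) ≤ _ := ciInf_le hbdd q
    _ < c := by rw [hterm]; exact hq2
  · refine le_ciInf fun q => ?_
    split_ifs with h
    · exact h.trans (le_max_left _ _)
    · linarith

/-- **The meet `𝒴 ∧ ℱ_m` contains `𝒴_m`, and under independence any random variable
measurable for both `𝒴` and `ℱ_m` is `𝒴_m`-measurable up to `Q`-null sets.** Here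
`𝒴 = σ(Y_1,...,Y_n)`, `𝒴_m = σ(Y_1,...,Y_m)`, `ℳ_m = σ({M ≤ i} : i ≤ m)`,
`ℱ_m = 𝒴_m ∨ ℳ_m`, and under `Q` the sigma-algebras `𝒴` and `ℳ_n` are independent. -/
theorem meet_contains_and_measurable_mod_null
    {Ω : Type*} {mΩ : MeasurableSpace Ω} (Q : Measure Ω) [IsProbabilityMeasure Q]
    (n : ℕ) {E : ℕ → Type*} [∀ i, MeasurableSpace (E i)]
    (Y : (i : ℕ) → Ω → E i) (hY : ∀ i, Measurable (Y i))
    (M : Ω → ℕ) (hMn : ∀ ω, M ω ≤ n) (hMmeas : Measurable M)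
    (𝒴fil : ℕ → MeasurableSpace Ω)
    (h𝒴fil : ∀ m, 𝒴fil m = ⨆ i ∈ Finset.Icc 1 m, MeasurableSpace.comap (Y i) inferInstance)
    (𝒴 : MeasurableSpace Ω) (h𝒴 : 𝒴 = 𝒴fil n)
    (ℳ : ℕ → MeasurableSpace Ω)
    (hℳ : ∀ m, ℳ m = MeasurableSpace.generateFrom {s | ∃ i ≤ m, s = {ω | M ω ≤ i}})
    (ℱ : ℕ → MeasurableSpace Ω) (hℱ : ∀ m, ℱ m = 𝒴fil m ⊔ ℳ m)
    (hIndep : Indep 𝒴 (ℳ n) Q) :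
    ∀ m ≤ n,
      (𝒴fil m ≤ 𝒴 ⊓ ℱ m) ∧
      (∀ f : Ω → ℝ, Measurable[𝒴] f → Measurable[ℱ m] f →
        ∃ g : Ω → ℝ, Measurable[𝒴fil m] g ∧ f =ᵐ[Q] g) := by
  intro m hmn
  have h𝒢le𝒴 : 𝒴fil m ≤ 𝒴 := by
    rw [h𝒴, h𝒴fil m, h𝒴fil n]
    exact biSup_mono fun i hi =>
      Finset.mem_Icc.mpr ⟨(Finset.mem_Icc.mp hi).1, le_trans (Finset.mem_Icc.mp hi).2 hmn⟩
  have h𝒴le : 𝒴 ≤ mΩ := by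
    rw [h𝒴, h𝒴fil n]
    exact iSup₂_le fun i _ => (hY i).comap_le
  have hℳle : ℳ m ≤ mΩ := by
    rw [hℳ m]
    refine MeasurableSpace.generateFrom_le ?_
    rintro s ⟨i, -, rfl⟩
    exact hMmeas measurableSet_Iic
  have hℳmono : ℳ m ≤ ℳ n := by
    rw [hℳ m, hℳ n]
    exact MeasurableSpace.generateFrom_mono
      (by rintro s ⟨i, him, rfl⟩; exact ⟨i, him.trans hmn, rfl⟩)
  refine ⟨le_inf h𝒢le𝒴 (by rw [hℱ m]; exact le_sup_left), ?_⟩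
  intro f hf𝒴 hfF
  have hInd' : ∀ t1 t2 : Set Ω, MeasurableSet[𝒴] t1 → MeasurableSet[ℳ m] t2 →
      Q (t1 ∩ t2) = Q t1 * Q t2 :=
    fun t1 t2 h1 h2 => ((Indep_iff 𝒴 (ℳ n) Q).mp hIndep) t1 t2 h1 (hℳmono _ h2)
  have hfF' : Measurable[𝒴fil m ⊔ ℳ m] f := by rw [← hℱ m]; exact hfF
  set f' : Ω → ℝ := fun ω => Real.arctan (f ω) with hf'def
  have hf'𝒴 : Measurable[𝒴] f' := Real.measurable_arctan.comp hf𝒴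
  have hf'F : Measurable[𝒴fil m ⊔ ℳ m] f' := Real.measurable_arctan.comp hfF'
  have hbound : ∀ ω, -2 < f' ω ∧ f' ω < 2 := by
    intro ω
    have h1 := Real.arctan_lt_pi_div_two (f ω)
    have h2 := Real.neg_pi_div_two_lt_arctan (f ω)
    have hπ := Real.pi_lt_d2
    have e : f' ω = Real.arctan (f ω) := rfl
    constructor <;> rw [e] <;> linarith
  set C : ℚ → Set Ω := fun q => f' ⁻¹' Set.Iic (q : ℝ) with hCdef
  have hC𝒴 : ∀ q, MeasurableSet[𝒴] (C q) := fun q => hf'𝒴 measurableSet_Iic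
  have hCF : ∀ q, MeasurableSet[𝒴fil m ⊔ ℳ m] (C q) := fun q => hf'F measurableSet_Iic
  set hq : ℚ → Ω → ℝ := fun q => Q[(C q).indicator (fun _ => (1 : ℝ))|𝒴fil m] with hhq
  have heq : ∀ q : ℚ, (C q).indicator (fun _ => (1 : ℝ)) =ᵐ[Q] hq q := fun q =>
    aux_indicator_ae_eq_condexp Q 𝒴 (𝒴fil m) (ℳ m) h𝒢le𝒴 h𝒴le hℳle hInd' (C q) (hC𝒴 q) (hCF q)
  have htan : Measurable Real.tan := by
    have e : Real.tan = fun x => Real.sin x / Real.cos x :=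
      funext fun x => Real.tan_eq_sin_div_cos x
    rw [e]; exact Real.measurable_sin.div Real.measurable_cos
  refine ⟨fun ω => Real.tan (⨅ q : ℚ, if 1/2 < hq q ω then max (q : ℝ) (-2) else 2), ?_, ?_⟩
  · refine htan.comp ?_
    refine Measurable.iInf fun q => Measurable.ite ?_ measurable_const measurable_const
    exact (stronglyMeasurable_condExp (m := 𝒴fil m)).measurable measurableSet_Ioi
  · have hae := ae_all_iff.mpr heq
    filter_upwards [hae] with ω hω
    have hcond : ∀ q : ℚ, (1/2 < hq q ω) ↔ f' ω ≤ (q : ℝ) := by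
      intro q
      rw [← hω q]
      by_cases hm' : f' ω ≤ (q : ℝ)
      · have hmem : ω ∈ C q := hm'
        simp only [Set.indicator_of_mem hmem]
        constructor
        · intro _; exact hm'
        · intro _; norm_num
      · have hmem : ω ∉ C q := hm'
        simp only [Set.indicator_of_notMem hmem]
        constructor
        · intro hlt; norm_num at hlt
        · intro hc; exact absurd hc hm'
    have hfun : (fun q : ℚ => if 1/2 < hq q ω then max (q : ℝ) (-2) else 2)
        = fun q : ℚ => if f' ω ≤ (q : ℝ) then max (q : ℝ) (-2) else 2 :=
      funext fun q => if_congr (hcond q) rfl rfl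
    show f ω = Real.tan _
    rw [hfun, aux_iInf_rat (f' ω) (hbound ω).1 (hbound ω).2]
    exact (Real.tan_arctan (f ω)).symm
end

section
/- Everywhere MAR implies measurable likelihood ratio (main theorem, monotone case): suppose P(M = m | 𝒴) = P(M = m | 𝒴_m) almost surely for every m ∈ {0,...,n}, where 𝒴_m = σ(Y_1,...,Y_m), ℳ_m = σ({M ≤ i} : i ≤ m), ℱ_m = 𝒴_m ∨ ℳ_m, and λ_m is a 𝒴_m-measurable version of P(M = m | 𝒴). Then the random variable λ defined by λ(ω) = λ_{M(ω)}(ω) is ℱ_M-measurable, where ℱ_M is the stopped sigma-algebra of the stopping time M. -/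
open MeasureTheory MeasurableSpace

/-- **Main theorem (monotone case): everywhere MAR implies the likelihood ratio is
data-measurable.** Suppose `P(M = m | 𝒴) = P(M = m | 𝒴_m)` a.s. for every `m`, in the
sense that each `λ_m`, a version of `P(M = m | 𝒴)`, is `𝒴_m`-measurable. With
`ℱ_m = 𝒴_m ∨ ℳ_m`, the stopped variable `λ(ω) = λ_{M(ω)}(ω)` is measurable with
respect to the stopped sigma-algebra
`ℱ_M = {A ∈ ℱ : A ∩ {M ≤ m} ∈ ℱ_m for all m}`. -/
theorem everywhere_mar_implies_measurable_likelihood_ratio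
    {Ω : Type*} {mΩ : MeasurableSpace Ω} (P : Measure Ω) [IsProbabilityMeasure P]
    (n : ℕ) {E : ℕ → Type*} [∀ i, MeasurableSpace (E i)]
    (Y : (i : ℕ) → Ω → E i) (hY : ∀ i, Measurable (Y i))
    (M : Ω → ℕ) (hMn : ∀ ω, M ω ≤ n) (hMmeas : Measurable M)
    (𝒴fil : ℕ → MeasurableSpace Ω)
    (h𝒴fil : ∀ m, 𝒴fil m = ⨆ i ∈ Finset.Icc 1 m, MeasurableSpace.comap (Y i) inferInstance)
    (𝒴 : MeasurableSpace Ω) (h𝒴 : 𝒴 = 𝒴fil n)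
    (ℳ : ℕ → MeasurableSpace Ω)
    (hℳ : ∀ m, ℳ m = MeasurableSpace.generateFrom {s | ∃ i ≤ m, s = {ω | M ω ≤ i}})
    (ℱ : ℕ → MeasurableSpace Ω) (hℱ : ∀ m, ℱ m = 𝒴fil m ⊔ ℳ m)
    (lam : ℕ → Ω → ℝ)
    (hlam_mar : ∀ m ≤ n, Measurable[𝒴fil m] (lam m))
    (hlam_ver : ∀ m ≤ n, lam m =ᵐ[P]
      P[({ω | M ω = m}).indicator (fun _ => (1 : ℝ)) | 𝒴]) :
    ∀ s : Set ℝ, MeasurableSet s →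
      (MeasurableSet[mΩ] ((fun ω => lam (M ω) ω) ⁻¹' s) ∧
        ∀ m, MeasurableSet[ℱ m]
          (((fun ω => lam (M ω) ω) ⁻¹' s) ∩ {ω | M ω ≤ m})) := by
  intro s hs
  -- 𝒴fil m ≤ mΩ
  have h𝒴le : ∀ m, 𝒴fil m ≤ mΩ := by
    intro m; rw [h𝒴fil]
    exact iSup_le fun i => iSup_le fun _ => (hY i).comap_le
  -- monotonicity of 𝒴fil
  have hmono : ∀ k m, k ≤ m → 𝒴fil k ≤ 𝒴fil m := by
    intro k m hkm; rw [h𝒴fil, h𝒴fil]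
    exact iSup_le fun i => iSup_le fun hi =>
      le_iSup_of_le i (le_iSup_of_le (Finset.Icc_subset_Icc_right hkm hi) le_rfl)
  -- ℳ m ≤ mΩ
  have hℳle : ∀ m, ℳ m ≤ mΩ := by
    intro m; rw [hℳ]
    apply MeasurableSpace.generateFrom_le
    rintro t ⟨i, _, rfl⟩
    exact hMmeas (measurableSet_le measurable_id measurable_const)
  have hℱle : ∀ m, ℱ m ≤ mΩ := by
    intro m; rw [hℱ]; exact sup_le (h𝒴le m) (hℳle m)
  -- {M ≤ i} is ℳ m-measurable for i ≤ m
  have hMle : ∀ i m, i ≤ m → MeasurableSet[ℳ m] {ω | M ω ≤ i} := by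
    intro i m him; rw [hℳ]
    exact MeasurableSpace.measurableSet_generateFrom ⟨i, him, rfl⟩
  -- {M = k} is ℳ m-measurable for k ≤ m
  have hMeq : ∀ k m, k ≤ m → MeasurableSet[ℳ m] {ω | M ω = k} := by
    intro k m hkm
    match k with
    | 0 =>
      have : {ω | M ω = 0} = {ω | M ω ≤ 0} := by ext ω; simp [Nat.le_zero]
      rw [this]; exact hMle 0 m hkm
    | k + 1 =>
      have : {ω | M ω = k + 1} = {ω | M ω ≤ k + 1} \ {ω | M ω ≤ k} := by
        ext ω; simp [Nat.lt_succ_iff, Set.mem_setOf_eq, Nat.le_antisymm_iff]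
      rw [this]
      exact (hMle _ m hkm).diff (hMle k m (le_trans (Nat.le_succ k) hkm))
  -- pieces
  have hpiece : ∀ k, k ≤ n → ∀ m, k ≤ m →
      MeasurableSet[ℱ m] ({ω | M ω = k} ∩ lam k ⁻¹' s) := by
    intro k hk m hkm
    rw [hℱ]
    refine MeasurableSet.inter ?_ ?_
    · exact (le_sup_right : ℳ m ≤ _) _ (hMeq k m hkm)
    · exact (le_sup_left : 𝒴fil m ≤ _) _ (hmono k m hkm _ (hlam_mar k hk hs))
  constructor
  · have hset : (fun ω => lam (M ω) ω) ⁻¹' s =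
        ⋃ k ∈ Finset.range (n + 1), ({ω | M ω = k} ∩ lam k ⁻¹' s) := by
      ext ω
      simp only [Set.mem_preimage, Set.mem_iUnion, Set.mem_inter_iff, Set.mem_setOf_eq,
        Finset.mem_range, Nat.lt_succ_iff]
      constructor
      · intro h; exact ⟨M ω, hMn ω, rfl, h⟩
      · rintro ⟨k, _, rfl, h⟩; exact h
    rw [hset]
    exact Finset.measurableSet_biUnion _ fun k hk =>
      hℱle n _ (hpiece k (Nat.lt_succ_iff.mp (Finset.mem_range.mp hk)) n
        (Nat.lt_succ_iff.mp (Finset.mem_range.mp hk)))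
  · intro m
    have hset : ((fun ω => lam (M ω) ω) ⁻¹' s) ∩ {ω | M ω ≤ m} =
        ⋃ k ∈ Finset.range (min m n + 1), ({ω | M ω = k} ∩ lam k ⁻¹' s) := by
      ext ω
      simp only [Set.mem_inter_iff, Set.mem_preimage, Set.mem_iUnion, Set.mem_setOf_eq,
        Finset.mem_range, Nat.lt_succ_iff, le_min_iff]
      constructor
      · rintro ⟨h, hm⟩; exact ⟨M ω, ⟨hm, hMn ω⟩, rfl, h⟩
      · rintro ⟨k, ⟨hk1, _⟩, rfl, h⟩; exact ⟨h, hk1⟩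
    rw [hset]
    refine Finset.measurableSet_biUnion _ fun k hk => ?_
    have hk' := Nat.lt_succ_iff.mp (Finset.mem_range.mp hk)
    exact hpiece k (le_trans hk' (min_le_right m n)) m (le_trans hk' (min_le_left m n))
end
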